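/- Assume Γ* is nonempty. Then v* = inf_{y ∈ cl(Ω)} F_v(y), and this infimum is attained at every point x ∈ Γ*. Moreover, if for every starting point x ∈ cl(Ω) the infima defining T_→d(x) and T_s←(x) are attained by some admissible trajectory (existence of optimal trajectories between any two points), then for x ∈ cl(Ω) one has F_v(x) = v* if and only if x ∈ Γ*. -/

import Mathlib

open Set Metric MeasureTheory
open scoped ENNReal

noncomputable section

/-- Points of the `d`-dimensional Euclidean space. -/
abbrev Pt (d : ℕ) := EuclideanSpace ℝ (Fin d)

/-- A control: a measurable map valued in the unit sphere. -/
def IsControl {d : ℕ} (α : ℝ → Pt d) : Prop :=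
  Measurable α ∧ ∀ t, ‖α t‖ = 1

/-- Admissible trajectory (in integral form, i.e. an absolutely continuous solution of the
controlled ODE) with control `α`, constrained to stay in `K`, with direction sign `σ`
(`σ = 1`: forward dynamics `y' = f(y,α)·α`; `σ = -1`: reverse dynamics `y' = -f(y,α)·α`),
starting at `x`, with horizon `τ`. -/
def IsTrajCtrl {d : ℕ} (K : Set (Pt d)) (f : Pt d → Pt d → ℝ) (σ : ℝ)
    (x : Pt d) (τ : ℝ) (y α : ℝ → Pt d) : Prop :=
  0 ≤ τ ∧ y 0 = x ∧ (∀ t ∈ Icc 0 τ, y t ∈ K) ∧ IsControl α ∧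
    ∀ t ∈ Icc 0 τ, y t = x + ∫ s in (0:ℝ)..t, (σ * f (y s) (α s)) • α s

/-- Admissible trajectory, for some control. -/
def IsTraj {d : ℕ} (K : Set (Pt d)) (f : Pt d → Pt d → ℝ) (σ : ℝ)
    (x : Pt d) (τ : ℝ) (y : ℝ → Pt d) : Prop :=
  ∃ α, IsTrajCtrl K f σ x τ y α

/-- Set of horizons of admissible trajectories from `x` ending in `target`. -/
def reachTimes {d : ℕ} (K : Set (Pt d)) (f : Pt d → Pt d → ℝ) (σ : ℝ)
    (target : Set (Pt d)) (x : Pt d) : Set ℝ :=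
  {τ | ∃ y : ℝ → Pt d, IsTraj K f σ x τ y ∧ y τ ∈ target}

/-- Minimum time, `∞` if the target is unreachable (`inf ∅ = ∞`). -/
def minTime {d : ℕ} (K : Set (Pt d)) (f : Pt d → Pt d → ℝ) (σ : ℝ)
    (target : Set (Pt d)) (x : Pt d) : ℝ≥0∞ :=
  ⨅ τ ∈ reachTimes K f σ target x, ENNReal.ofReal τ

/-- Kruzkov transform `1 - e^{-T}`, with the convention `e^{-∞} = 0`. -/
def kruzkov (T : ℝ≥0∞) : ℝ := if T = ∞ then 1 else 1 - Real.exp (-T.toReal)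

/-- Value function (Kruzkov transform of the minimum time). -/
def val {d : ℕ} (K : Set (Pt d)) (f : Pt d → Pt d → ℝ) (σ : ℝ)
    (target : Set (Pt d)) (x : Pt d) : ℝ :=
  kruzkov (minTime K f σ target x)

/-- Geodesic points from `x`: points `y(t)` of optimal trajectories from `x` to `target`. -/
def geodPts {d : ℕ} (K : Set (Pt d)) (f : Pt d → Pt d → ℝ) (σ : ℝ)
    (target : Set (Pt d)) (x : Pt d) : Set (Pt d) :=
  {p | ∃ τ y, IsTraj K f σ x τ y ∧ y τ ∈ target ∧
    ENNReal.ofReal τ = minTime K f σ target x ∧ ∃ t ∈ Icc 0 τ, p = y t}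

/-- δ-geodesic points from `x`: points `y(t)` of δ-optimal trajectories from `x` to `target`. -/
def deltaGeodPts {d : ℕ} (K : Set (Pt d)) (f : Pt d → Pt d → ℝ) (σ : ℝ)
    (target : Set (Pt d)) (x : Pt d) (δ : ℝ) : Set (Pt d) :=
  {p | ∃ τ y, IsTraj K f σ x τ y ∧ y τ ∈ target ∧
    1 - Real.exp (-τ) ≤ val K f σ target x + δ ∧ ∃ t ∈ Icc 0 τ, p = y t}

/-- The setting of the minimum time problem: a nonempty bounded open domain `Ω ⊆ ℝ^d` with
`d ≥ 1`, a positive continuous bounded Lipschitz speed function `f` on `cl(Ω) × S₁`, and two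
disjoint nonempty compact subsets `K_src, K_dst` of `Ω`. -/
structure Setting (d : ℕ) where
  Ω : Set (Pt d)
  f : Pt d → Pt d → ℝ
  Mf : ℝ
  Lf : ℝ
  Lfa : ℝ
  Ksrc : Set (Pt d)
  Kdst : Set (Pt d)
  hd : 1 ≤ d
  hΩopen : IsOpen Ω
  hΩbdd : Bornology.IsBounded Ω
  hΩne : Ω.Nonempty
  hfcont : ContinuousOn (fun p : Pt d × Pt d => f p.1 p.2) (closure Ω ×ˢ sphere (0 : Pt d) 1)
  hfpos : ∀ x ∈ closure Ω, ∀ a ∈ sphere (0 : Pt d) 1, 0 < f x a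
  hfbdd : ∀ x ∈ closure Ω, ∀ a ∈ sphere (0 : Pt d) 1, f x a ≤ Mf
  hfLipx : ∀ a ∈ sphere (0 : Pt d) 1, ∀ x ∈ closure Ω, ∀ x' ∈ closure Ω,
    |f x a - f x' a| ≤ Lf * ‖x - x'‖
  hfLipa : ∀ x ∈ closure Ω, ∀ a ∈ sphere (0 : Pt d) 1, ∀ a' ∈ sphere (0 : Pt d) 1,
    |f x a - f x a'| ≤ Lfa * ‖a - a'‖
  hKsrcComp : IsCompact Ksrc
  hKdstComp : IsCompact Kdst
  hKsrcNe : Ksrc.Nonempty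
  hKdstNe : Kdst.Nonempty
  hKsrcSub : Ksrc ⊆ Ω
  hKdstSub : Kdst ⊆ Ω
  hKdisj : Disjoint Ksrc Kdst

namespace Setting

variable {d : ℕ} (S : Setting d)

/-- Minimum time to destination `T_→d`. -/
def Td (x : Pt d) : ℝ≥0∞ := minTime (closure S.Ω) S.f 1 S.Kdst x

/-- Minimum time from source `T_s←` (reverse dynamics). -/
def Ts (x : Pt d) : ℝ≥0∞ := minTime (closure S.Ω) S.f (-1) S.Ksrc x

/-- Value function to destination `v_→d = 1 - e^{-T_→d}`. -/
def vd (x : Pt d) : ℝ := val (closure S.Ω) S.f 1 S.Kdst x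

/-- Value function from source `v_s← = 1 - e^{-T_s←}`. -/
def vs (x : Pt d) : ℝ := val (closure S.Ω) S.f (-1) S.Ksrc x

/-- State-constrained value function to destination: trajectories confined to `K`. -/
def vdC (K : Set (Pt d)) (x : Pt d) : ℝ := val K S.f 1 S.Kdst x

/-- State-constrained value function from source: trajectories confined to `K`. -/
def vsC (K : Set (Pt d)) (x : Pt d) : ℝ := val K S.f (-1) S.Ksrc x

/-- `F_v(x) = v_s←(x) + v_→d(x) − v_s←(x)·v_→d(x)`. -/
def Fv (x : Pt d) : ℝ := S.vs x + S.vd x - S.vs x * S.vd x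

/-- The neighborhood `O_η` of the optimal trajectories. -/
def Oset (η : ℝ) : Set (Pt d) :=
  {x ∈ S.Ω \ (S.Ksrc ∪ S.Kdst) | S.Fv x < sInf (S.Fv '' S.Ω) + η}

/-- `X_src = Argmin_{x ∈ K_src} v_→d(x)`. -/
def Xsrc : Set (Pt d) := {x ∈ S.Ksrc | ∀ z ∈ S.Ksrc, S.vd x ≤ S.vd z}

/-- `X_dst = Argmin_{x ∈ K_dst} v_s←(x)`. -/
def Xdst : Set (Pt d) := {x ∈ S.Kdst | ∀ z ∈ S.Kdst, S.vs x ≤ S.vs z}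

/-- The set of forward geodesic points `∪_{x ∈ X_src} Γ*_x`. -/
def GammaFwd : Set (Pt d) := ⋃ x ∈ S.Xsrc, geodPts (closure S.Ω) S.f 1 S.Kdst x

/-- The set of reverse geodesic points `∪_{x ∈ X_dst} Γ̃*_x`. -/
def GammaRev : Set (Pt d) := ⋃ x ∈ S.Xdst, geodPts (closure S.Ω) S.f (-1) S.Ksrc x

/-- `v* = inf_{x ∈ K_src} v_→d(x)`. -/
def vStar : ℝ := sInf (S.vd '' S.Ksrc)

/-- `X_src^δ = {x ∈ ∂K_src : v_→d(x) ≤ v* + δ}`. -/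
def XsrcD (δ : ℝ) : Set (Pt d) := {x ∈ frontier S.Ksrc | S.vd x ≤ S.vStar + δ}

/-- `X_dst^δ = {x ∈ ∂K_dst : v_s←(x) ≤ v* + δ}`. -/
def XdstD (δ : ℝ) : Set (Pt d) := {x ∈ frontier S.Kdst | S.vs x ≤ S.vStar + δ}

/-- The set of forward δ-geodesic points `Γ^δ`. -/
def GammaD (δ : ℝ) : Set (Pt d) :=
  ⋃ δ' ∈ Icc (0:ℝ) δ, ⋃ x ∈ S.XsrcD (δ - δ'), deltaGeodPts (closure S.Ω) S.f 1 S.Kdst x δ'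

/-- The set of reverse δ-geodesic points. -/
def GammaDRev (δ : ℝ) : Set (Pt d) :=
  ⋃ δ' ∈ Icc (0:ℝ) δ, ⋃ x ∈ S.XdstD (δ - δ'), deltaGeodPts (closure S.Ω) S.f (-1) S.Ksrc x δ'

end Setting

/-! Since `1 - kruzkov (T₁ + T₂) = (1 - kruzkov T₁) (1 - kruzkov T₂)`, we have
`F_v(x) = kruzkov (T_s←(x) + T_→d(x))`, so everything reduces to minimum times. Reversing a
reverse trajectory from `x` to `K_src` and appending a forward trajectory from `x` to `K_dst`
gives a forward trajectory from a point of `K_src` through `x`, hence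
`T_s←(x) + T_→d(x) ≥ T_→d(p)` for every `p ∈ X_src`, i.e. `F_v ≥ v*`. Conversely a point of
an optimal trajectory from `p ∈ X_src` splits it into a reverse trajectory back to `p` and a
forward one to `K_dst`, which gives equality; and if optimal trajectories exist at `x` and
`F_v(x) = v*`, their concatenation is an optimal trajectory from a point of `X_src` through `x`.
-/

open Filter

theorem kruzkov_strictMono : StrictMono kruzkov := by
  intro a b hab
  have ha : a ≠ ∞ := hab.ne_top
  rcases eq_or_ne b ∞ with rfl | hb
  · simp [kruzkov, ha, Real.exp_pos]
  · simp only [kruzkov, ha, hb, if_false]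
    have := Real.exp_lt_exp.2 (neg_lt_neg ((ENNReal.toReal_lt_toReal ha hb).2 hab))
    linarith

theorem kruzkov_nonneg (T : ℝ≥0∞) : 0 ≤ kruzkov T := by
  simpa [kruzkov] using kruzkov_strictMono.monotone (zero_le : 0 ≤ T)

theorem kruzkov_add (T₁ T₂ : ℝ≥0∞) :
    kruzkov (T₁ + T₂) = 1 - (1 - kruzkov T₁) * (1 - kruzkov T₂) := by
  rcases eq_or_ne T₁ ∞ with rfl | h₁
  · simp [kruzkov]
  rcases eq_or_ne T₂ ∞ with rfl | h₂
  · simp [kruzkov]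
  simp [kruzkov, h₁, h₂, ENNReal.toReal_add h₁ h₂, Real.exp_add, mul_comm]

theorem ContinuousOn.comp_aestronglyMeasurable_of_ae_mem {α X : Type*} [MeasurableSpace α]
    [TopologicalSpace X] [NormalSpace X] {μ : Measure α} {D : Set X} {F : X → ℝ} {u : α → X}
    (hD : IsClosed D) (hF : ContinuousOn F D) (hu : AEStronglyMeasurable u μ)
    (hmem : ∀ᵐ t ∂μ, u t ∈ D) : AEStronglyMeasurable (fun t => F (u t)) μ := by
  obtain ⟨G, hG⟩ := ContinuousMap.exists_restrict_eq hD ⟨_, hF.domRestrict⟩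
  refine (G.continuous.comp_aestronglyMeasurable hu).congr ?_
  filter_upwards [hmem] with t ht
  exact congrFun (congrArg DFunLike.coe hG) ⟨u t, ht⟩

theorem aestronglyMeasurable_of_eq_add_primitive {E : Type*} [NormedAddCommGroup E]
    [NormedSpace ℝ E] {g y : ℝ → E} {x : E} {τ : ℝ} (hτ : 0 ≤ τ)
    (hy : ∀ t ∈ Icc 0 τ, y t = x + ∫ s in (0:ℝ)..t, g s) :
    AEStronglyMeasurable y (volume.restrict (Ioc 0 τ)) := by
  -- `g` is integrable on `[0, t]` exactly for `t` in an initial segment ending at `c`; before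
  -- `c` the curve `y` is continuous, after `c` the integral is junk and `y` is constant
  set A := {t ∈ Icc 0 τ | IntervalIntegrable g volume 0 t}
  have hA0 : (0:ℝ) ∈ A := ⟨⟨le_rfl, hτ⟩, IntervalIntegrable.refl⟩
  have hAbdd : BddAbove A := ⟨τ, fun t ht => ht.1.2⟩
  set c := sSup A
  have hc0 : 0 ≤ c := le_csSup hAbdd hA0
  have hcτ : c ≤ τ := csSup_le ⟨0, hA0⟩ fun t ht => ht.1.2
  have hcont : ContinuousOn y (Ico 0 c) := by
    intro s hs
    obtain ⟨u, ⟨hu, hgu⟩, hsu⟩ := exists_lt_of_lt_csSup ⟨0, hA0⟩ hs.2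
    have hyu : ContinuousOn y (Icc 0 u) := by
      have := intervalIntegral.continuousOn_primitive_interval' hgu left_mem_uIcc
      rw [uIcc_of_le hu.1] at this
      exact (continuousOn_const.add this).congr fun t ht => hy t ⟨ht.1, ht.2.trans hu.2⟩
    refine (hyu s ⟨hs.1, hsu.le⟩).mono_of_mem_nhdsWithin ?_
    filter_upwards [self_mem_nhdsWithin, nhdsWithin_le_nhds (Iio_mem_nhds hsu)] with t ht htu
    exact ⟨ht.1, le_of_lt htu⟩
  have hconst : ∀ t ∈ Ioc c τ, y t = x := by
    intro t ht
    have hg : ¬ IntervalIntegrable g volume 0 t := fun hg =>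
      (le_csSup hAbdd ⟨⟨hc0.trans ht.1.le, ht.2⟩, hg⟩).not_gt ht.1
    simpa [intervalIntegral.integral_undef hg] using hy t ⟨hc0.trans ht.1.le, ht.2⟩
  have hsub : Ioc 0 τ ⊆ Ico 0 c ∪ {c} ∪ Ioc c τ := by
    intro t ht
    rcases lt_trichotomy t c with h | rfl | h
    · exact Or.inl (Or.inl ⟨ht.1.le, h⟩)
    · exact Or.inl (Or.inr rfl)
    · exact Or.inr ⟨h, ht.2⟩
  refine AEStronglyMeasurable.mono_measure ?_ (Measure.restrict_mono hsub le_rfl)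
  rw [aestronglyMeasurable_union_iff, aestronglyMeasurable_union_iff]
  refine ⟨⟨hcont.aestronglyMeasurable measurableSet_Ico, ?_⟩, ?_⟩
  · simp [Measure.restrict_eq_zero.2 (Real.volume_singleton (a := c))]
  · refine (aestronglyMeasurable_const (b := x)).congr ?_
    filter_upwards [ae_restrict_mem measurableSet_Ioc] with t ht
    exact (hconst t ht).symm

theorem integral_eq_add_of_eqOn_Iic_Ioi {E : Type*} [NormedAddCommGroup E] [NormedSpace ℝ E]
    {G g₁ g₂ : ℝ → E} {a t : ℝ} (ha : 0 ≤ a) (hat : a ≤ t) (hG₁ : EqOn G g₁ (Iic a))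
    (hG₂ : EqOn G (fun s => g₂ (s - a)) (Ioi a)) (hg₁ : IntervalIntegrable g₁ volume 0 a)
    (hg₂ : IntervalIntegrable g₂ volume 0 (t - a)) :
    ∫ s in (0:ℝ)..t, G s = (∫ s in (0:ℝ)..a, g₁ s) + ∫ s in (0:ℝ)..(t - a), g₂ s := by
  have hG₁' : EqOn G g₁ (uIoc 0 a) := hG₁.mono fun s hs => by
    rw [uIoc_of_le ha] at hs; exact hs.2
  have hG₂' : EqOn G (fun s => g₂ (s - a)) (uIoc a t) := hG₂.mono fun s hs => by
    rw [uIoc_of_le hat] at hs; exact hs.1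
  have hg₂' : IntervalIntegrable (fun s => g₂ (s - a)) volume a t := by
    simpa using hg₂.comp_sub_right a
  rw [← intervalIntegral.integral_add_adjacent_intervals
      ((intervalIntegrable_congr hG₁').2 hg₁) ((intervalIntegrable_congr hG₂').2 hg₂'),
    intervalIntegral.integral_congr_ae (Eventually.of_forall fun s hs => hG₁' hs),
    intervalIntegral.integral_congr_ae (Eventually.of_forall fun s hs => hG₂' hs),
    intervalIntegral.integral_comp_sub_right g₂ a, sub_self]

section Trajectories

variable {d : ℕ} {K : Set (Pt d)} {f : Pt d → Pt d → ℝ} {σ : ℝ} {x : Pt d} {τ : ℝ}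
  {y α : ℝ → Pt d}

theorem IsTraj.nonneg (h : IsTraj K f σ x τ y) : 0 ≤ τ :=
  h.elim fun _ h => h.1

theorem IsTraj.apply_zero (h : IsTraj K f σ x τ y) : y 0 = x :=
  h.elim fun _ h => h.2.1

theorem IsTraj.mem (h : IsTraj K f σ x τ y) {t : ℝ} (ht : t ∈ Icc 0 τ) : y t ∈ K :=
  h.elim fun _ h => h.2.2.1 t ht

theorem minTime_le_ofReal {tgt : Set (Pt d)} (h : IsTraj K f σ x τ y) (hy : y τ ∈ tgt) :
    minTime K f σ tgt x ≤ ENNReal.ofReal τ :=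
  iInf₂_le τ ⟨y, h, hy⟩

theorem le_minTime_add_minTime {K' : Set (Pt d)} {f' : Pt d → Pt d → ℝ} {σ' : ℝ}
    {tgt tgt' : Set (Pt d)} {x' : Pt d} {c : ℝ≥0∞}
    (h : ∀ τ ∈ reachTimes K f σ tgt x, ∀ τ' ∈ reachTimes K' f' σ' tgt' x',
      c ≤ ENNReal.ofReal τ + ENNReal.ofReal τ') :
    c ≤ minTime K f σ tgt x + minTime K' f' σ' tgt' x' := by
  simp only [minTime, ENNReal.iInf_add, ENNReal.add_iInf]
  exact le_iInf₂ fun τ' hτ' => le_iInf₂ fun τ hτ => h τ hτ τ' hτ'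

theorem IsTrajCtrl.intervalIntegrable (hK : IsCompact K)
    (hf : ContinuousOn (fun p : Pt d × Pt d => f p.1 p.2) (K ×ˢ sphere 0 1))
    (h : IsTrajCtrl K f σ x τ y α) :
    IntervalIntegrable (fun s => (σ * f (y s) (α s)) • α s) volume 0 τ := by
  obtain ⟨hτ, -, hmem, ⟨hαm, hα⟩, hy⟩ := h
  obtain ⟨M, hM⟩ := (hK.prod (isCompact_sphere 0 1)).exists_bound_of_continuousOn hf
  have hsphere : ∀ s, α s ∈ sphere 0 1 := by simpa using hα
  have hfm : AEStronglyMeasurable (fun s => f (y s) (α s)) (volume.restrict (Ioc 0 τ)) :=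
    hf.comp_aestronglyMeasurable_of_ae_mem (hK.isClosed.prod isClosed_sphere)
      ((aestronglyMeasurable_of_eq_add_primitive hτ hy).prodMk hαm.aestronglyMeasurable)
      (ae_restrict_of_forall_mem measurableSet_Ioc fun s hs =>
        ⟨hmem s (Ioc_subset_Icc_self hs), hsphere s⟩)
  rw [intervalIntegrable_iff_integrableOn_Ioc_of_le hτ]
  refine Integrable.mono' (integrableOn_const (C := |σ| * M) measure_Ioc_lt_top.ne)
    ((hfm.const_mul σ).smul hαm.aestronglyMeasurable) ?_
  filter_upwards [ae_restrict_mem measurableSet_Ioc] with s hs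
  have := hM (y s, α s) ⟨hmem s (Ioc_subset_Icc_self hs), hsphere s⟩
  simp only [norm_smul, hα, norm_mul, Real.norm_eq_abs, mul_one] at this ⊢
  gcongr

theorem IsTrajCtrl.sub_eq_integral (h : IsTrajCtrl K f σ x τ y α)
    (hg : IntervalIntegrable (fun s => (σ * f (y s) (α s)) • α s) volume 0 τ)
    {s t : ℝ} (hs : s ∈ Icc 0 τ) (ht : t ∈ Icc 0 τ) :
    y t - y s = ∫ u in s..t, (σ * f (y u) (α u)) • α u := by
  have hsub : ∀ {r}, r ∈ Icc 0 τ → IntervalIntegrable (fun s => (σ * f (y s) (α s)) • α s)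
      volume 0 r := fun hr =>
    hg.mono_set (uIcc_subset_uIcc left_mem_uIcc (Icc_subset_uIcc hr))
  rw [h.2.2.2.2 t ht, h.2.2.2.2 s hs, add_sub_add_left_eq_sub,
    intervalIntegral.integral_interval_sub_left (hsub ht) (hsub hs)]

theorem IsTraj.restrict (h : IsTraj K f σ x τ y) {t : ℝ} (ht : t ∈ Icc 0 τ) :
    IsTraj K f σ x t y := by
  obtain ⟨α, -, h0, hmem, hα, hy⟩ := h
  exact ⟨α, ht.1, h0, fun s hs => hmem s ⟨hs.1, hs.2.trans ht.2⟩, hα,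
    fun s hs => hy s ⟨hs.1, hs.2.trans ht.2⟩⟩

theorem IsTraj.reverse (hK : IsCompact K)
    (hf : ContinuousOn (fun p : Pt d × Pt d => f p.1 p.2) (K ×ˢ sphere 0 1))
    (h : IsTraj K f σ x τ y) : IsTraj K f (-σ) (y τ) τ (fun s => y (τ - s)) := by
  obtain ⟨α, h⟩ := h
  have hg := h.intervalIntegrable hK hf
  have hrefl : ∀ {s}, s ∈ Icc 0 τ → τ - s ∈ Icc 0 τ := fun hs =>
    ⟨by linarith [hs.2], by linarith [hs.1]⟩
  refine ⟨fun s => α (τ - s), h.1, by simp, fun s hs => h.2.2.1 _ (hrefl hs),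
    ⟨h.2.2.2.1.1.comp (measurable_const.sub measurable_id), fun s => h.2.2.2.1.2 _⟩,
    fun t ht => ?_⟩
  have hint : ∫ s in (0:ℝ)..t, (-σ * f (y (τ - s)) (α (τ - s))) • α (τ - s)
      = y (τ - t) - y τ := by
    have hsub := intervalIntegral.integral_comp_sub_left
      (fun u => (σ * f (y u) (α u)) • α u) τ (a := 0) (b := t)
    rw [sub_zero] at hsub
    rw [h.sub_eq_integral hg ⟨h.1, le_rfl⟩ (hrefl ht), intervalIntegral.integral_symm (τ - t),
      ← hsub, ← intervalIntegral.integral_neg]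
    simp only [neg_mul, neg_smul]
  rw [hint]
  abel

theorem IsTraj.shift (hK : IsCompact K)
    (hf : ContinuousOn (fun p : Pt d × Pt d => f p.1 p.2) (K ×ˢ sphere 0 1))
    (h : IsTraj K f σ x τ y) {t : ℝ} (ht : t ∈ Icc 0 τ) :
    IsTraj K f σ (y t) (τ - t) (fun s => y (t + s)) := by
  obtain ⟨α, h⟩ := h
  have hg := h.intervalIntegrable hK hf
  have htrans : ∀ {s}, s ∈ Icc 0 (τ - t) → t + s ∈ Icc 0 τ := fun hs =>
    ⟨by linarith [hs.1, ht.1], by linarith [hs.2]⟩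
  refine ⟨fun s => α (t + s), by linarith [ht.2], by simp, fun s hs => h.2.2.1 _ (htrans hs),
    ⟨h.2.2.2.1.1.comp (measurable_const.add measurable_id), fun s => h.2.2.2.1.2 _⟩,
    fun s hs => ?_⟩
  rw [intervalIntegral.integral_comp_add_left (fun u => (σ * f (y u) (α u)) • α u) t, add_zero,
    ← h.sub_eq_integral hg ht (htrans hs)]
  abel

theorem IsTraj.append (hK : IsCompact K)
    (hf : ContinuousOn (fun p : Pt d × Pt d => f p.1 p.2) (K ×ˢ sphere 0 1))
    {τ₁ τ₂ : ℝ} {y₁ y₂ : ℝ → Pt d} (h₁ : IsTraj K f σ x τ₁ y₁)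
    (h₂ : IsTraj K f σ (y₁ τ₁) τ₂ y₂) :
    IsTraj K f σ x (τ₁ + τ₂) (fun s => if s ≤ τ₁ then y₁ s else y₂ (s - τ₁)) := by
  obtain ⟨α₁, h₁⟩ := h₁
  obtain ⟨α₂, h₂⟩ := h₂
  set g₁ := fun s => (σ * f (y₁ s) (α₁ s)) • α₁ s
  set g₂ := fun s => (σ * f (y₂ s) (α₂ s)) • α₂ s
  set A := fun s => if s ≤ τ₁ then α₁ s else α₂ (s - τ₁)
  set G := fun s => (σ * f (if s ≤ τ₁ then y₁ s else y₂ (s - τ₁)) (A s)) • A s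
  have hG₁ : EqOn G g₁ (Iic τ₁) := fun s hs => by simp [G, A, g₁, show s ≤ τ₁ from hs]
  have hG₂ : EqOn G (fun s => g₂ (s - τ₁)) (Ioi τ₁) := fun s hs => by
    simp [G, A, g₂, not_le.2 (show τ₁ < s from hs)]
  have hτ₁ := h₁.1
  have hτ₂ := h₂.1
  refine ⟨A, by linarith, by simp [hτ₁, h₁.2.1], fun s hs => ?_, ⟨?_, fun s => ?_⟩, fun t ht => ?_⟩
  · dsimp only
    split_ifs with hsτ
    · exact h₁.2.2.1 s ⟨hs.1, hsτ⟩
    · exact h₂.2.2.1 _ ⟨by linarith [not_le.1 hsτ], by linarith [hs.2]⟩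
  · exact Measurable.ite measurableSet_Iic h₁.2.2.2.1.1
      (h₂.2.2.2.1.1.comp (measurable_id.sub measurable_const))
  · simp only [A]
    split_ifs
    exacts [h₁.2.2.2.1.2 s, h₂.2.2.2.1.2 _]
  show (if t ≤ τ₁ then y₁ t else y₂ (t - τ₁)) = x + ∫ s in (0:ℝ)..t, G s
  split_ifs with htτ
  · rw [intervalIntegral.integral_congr fun s hs => hG₁ (by
      rw [uIcc_of_le ht.1] at hs; exact hs.2.trans htτ)]
    exact h₁.2.2.2.2 t ⟨ht.1, htτ⟩
  · have ht₂ : t - τ₁ ∈ Icc 0 τ₂ := ⟨by linarith [not_le.1 htτ], by linarith [ht.2]⟩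
    rw [integral_eq_add_of_eqOn_Iic_Ioi hτ₁ (le_of_not_ge htτ) hG₁ hG₂
      (h₁.intervalIntegrable hK hf) ((h₂.intervalIntegrable hK hf).mono_set
        (uIcc_subset_uIcc left_mem_uIcc (Icc_subset_uIcc ht₂))),
      h₂.2.2.2.2 _ ht₂, h₁.2.2.2.2 τ₁ ⟨hτ₁, le_rfl⟩, add_assoc]

theorem IsTraj.exists_through (hK : IsCompact K)
    (hf : ContinuousOn (fun p : Pt d × Pt d => f p.1 p.2) (K ×ˢ sphere 0 1))
    {τ₁ τ₂ : ℝ} {y₁ y₂ : ℝ → Pt d} (h₁ : IsTraj K f (-σ) x τ₁ y₁)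
    (h₂ : IsTraj K f σ x τ₂ y₂) :
    ∃ y, IsTraj K f σ (y₁ τ₁) (τ₁ + τ₂) y ∧ y τ₁ = x ∧ y (τ₁ + τ₂) = y₂ τ₂ := by
  have hrev : IsTraj K f σ (y₁ τ₁) τ₁ (fun s => y₁ (τ₁ - s)) := by
    simpa using h₁.reverse hK hf
  refine ⟨_, hrev.append hK hf (by simpa [h₁.apply_zero] using h₂), by simp [h₁.apply_zero], ?_⟩
  split_ifs with hτ₂
  · obtain rfl : τ₂ = 0 := le_antisymm (by linarith) h₂.nonneg
    simp [h₁.apply_zero, h₂.apply_zero]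
  · simp

end Trajectories

namespace Setting

variable {d : ℕ} (S : Setting d)

theorem isCompact_closure : IsCompact (closure S.Ω) :=
  S.hΩbdd.isCompact_closure

theorem Fv_eq_kruzkov (x : Pt d) : S.Fv x = kruzkov (S.Ts x + S.Td x) := by
  rw [kruzkov_add]
  change S.vs x + S.vd x - S.vs x * S.vd x = _
  simp only [vs, vd, val, Ts, Td]
  ring

theorem vStar_le_vd {q : Pt d} (hq : q ∈ S.Ksrc) : S.vStar ≤ S.vd q :=
  csInf_le ⟨0, forall_mem_image.2 fun _ _ => kruzkov_nonneg _⟩ (mem_image_of_mem _ hq)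

variable {S}

theorem vStar_eq_vd {p : Pt d} (hp : p ∈ S.Xsrc) : S.vStar = S.vd p :=
  le_antisymm (S.vStar_le_vd hp.1) (le_csInf (S.hKsrcNe.image _) (forall_mem_image.2 hp.2))

theorem Td_le_Ts_add_Td {p : Pt d} (hp : p ∈ S.Xsrc) (x : Pt d) :
    S.Td p ≤ S.Ts x + S.Td x := by
  refine le_minTime_add_minTime fun τ₁ ⟨y₁, h₁, hy₁⟩ τ₂ ⟨y₂, h₂, hy₂⟩ => ?_
  obtain ⟨y, hy, -, hyend⟩ := h₁.exists_through S.isCompact_closure S.hfcont h₂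
  calc S.Td p ≤ S.Td (y₁ τ₁) := kruzkov_strictMono.le_iff_le.1 (hp.2 _ hy₁)
    _ ≤ ENNReal.ofReal (τ₁ + τ₂) := minTime_le_ofReal hy (hyend ▸ hy₂)
    _ = ENNReal.ofReal τ₁ + ENNReal.ofReal τ₂ := ENNReal.ofReal_add h₁.nonneg h₂.nonneg

theorem vStar_le_Fv {p : Pt d} (hp : p ∈ S.Xsrc) (x : Pt d) : S.vStar ≤ S.Fv x := by
  rw [vStar_eq_vd hp, Fv_eq_kruzkov]
  exact kruzkov_strictMono.monotone (Td_le_Ts_add_Td hp x)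

theorem Ts_add_Td_le_of_mem_geodPts {p x : Pt d} (hp : p ∈ S.Ksrc)
    (hx : x ∈ geodPts (closure S.Ω) S.f 1 S.Kdst p) : S.Ts x + S.Td x ≤ S.Td p := by
  obtain ⟨τ, y, hy, hyτ, hopt, t, ht, rfl⟩ := hx
  have hhead := (hy.restrict ht).reverse S.isCompact_closure S.hfcont
  have htail := hy.shift S.isCompact_closure S.hfcont ht
  calc S.Ts (y t) + S.Td (y t) ≤ ENNReal.ofReal t + ENNReal.ofReal (τ - t) :=
        add_le_add (minTime_le_ofReal hhead (by simpa [hy.apply_zero] using hp))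
          (minTime_le_ofReal htail (by simpa using hyτ))
    _ = S.Td p := by rw [← ENNReal.ofReal_add ht.1 (by linarith [ht.2]), add_sub_cancel, hopt]; rfl

theorem GammaFwd_subset_closure : S.GammaFwd ⊆ closure S.Ω := by
  intro x hx
  obtain ⟨p, -, τ, y, hy, -, -, t, ht, rfl⟩ := mem_iUnion₂.1 hx
  exact hy.mem ht

theorem Fv_eq_vStar_of_mem_GammaFwd {x : Pt d} (hx : x ∈ S.GammaFwd) : S.Fv x = S.vStar := by
  obtain ⟨p, hp, hxp⟩ := mem_iUnion₂.1 hx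
  refine le_antisymm ?_ (vStar_le_Fv hp x)
  rw [vStar_eq_vd hp, Fv_eq_kruzkov]
  exact kruzkov_strictMono.monotone (Ts_add_Td_le_of_mem_geodPts hp.1 hxp)

theorem mem_GammaFwd_of_Fv_eq_vStar {x : Pt d}
    (hd : ∃ τ y, IsTraj (closure S.Ω) S.f 1 x τ y ∧ y τ ∈ S.Kdst ∧ ENNReal.ofReal τ = S.Td x)
    (hs : ∃ τ y, IsTraj (closure S.Ω) S.f (-1) x τ y ∧ y τ ∈ S.Ksrc ∧
      ENNReal.ofReal τ = S.Ts x)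
    (hFv : S.Fv x = S.vStar) : x ∈ S.GammaFwd := by
  obtain ⟨τ₂, y₂, h₂, hy₂, hT₂⟩ := hd
  obtain ⟨τ₁, y₁, h₁, hy₁, hT₁⟩ := hs
  obtain ⟨y, hy, hyx, hyend⟩ := h₁.exists_through S.isCompact_closure S.hfcont h₂
  have hsum : S.Ts x + S.Td x = ENNReal.ofReal (τ₁ + τ₂) := by
    rw [← hT₁, ← hT₂, ENNReal.ofReal_add h₁.nonneg h₂.nonneg]
  have hFv' : S.vStar = kruzkov (ENNReal.ofReal (τ₁ + τ₂)) := by rw [← hFv, Fv_eq_kruzkov, hsum]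
  have hvd : S.vd (y₁ τ₁) = S.vStar :=
    le_antisymm (hFv' ▸ kruzkov_strictMono.monotone (minTime_le_ofReal hy (hyend ▸ hy₂)))
      (S.vStar_le_vd hy₁)
  refine mem_iUnion₂.2 ⟨y₁ τ₁, ⟨hy₁, fun q hq => hvd ▸ S.vStar_le_vd hq⟩, τ₁ + τ₂, y, hy,
    hyend ▸ hy₂, kruzkov_strictMono.injective (hFv'.symm.trans hvd.symm), τ₁,
    ⟨h₁.nonneg, by linarith [h₂.nonneg]⟩, hyx.symm⟩

end Setting

theorem vStar_eq_inf_Fv_general {d : ℕ} (S : Setting d)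
    (hne : S.GammaFwd.Nonempty) :
    S.vStar = sInf (S.Fv '' closure S.Ω) ∧
    (∀ x ∈ S.GammaFwd, S.Fv x = S.vStar) ∧
    ((∀ x ∈ closure S.Ω,
        (∃ τ y, IsTraj (closure S.Ω) S.f 1 x τ y ∧ y τ ∈ S.Kdst ∧
          ENNReal.ofReal τ = S.Td x) ∧
        (∃ τ y, IsTraj (closure S.Ω) S.f (-1) x τ y ∧ y τ ∈ S.Ksrc ∧
          ENNReal.ofReal τ = S.Ts x)) →
      ∀ x ∈ closure S.Ω, (S.Fv x = S.vStar ↔ x ∈ S.GammaFwd)) := by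
  obtain ⟨x₀, hx₀⟩ := hne
  obtain ⟨p, hp, -⟩ := mem_iUnion₂.1 hx₀
  refine ⟨?_, fun x hx => S.Fv_eq_vStar_of_mem_GammaFwd hx, fun hopt x hx => ?_⟩
  · have hleast : IsLeast (S.Fv '' closure S.Ω) S.vStar :=
      ⟨⟨x₀, S.GammaFwd_subset_closure hx₀, S.Fv_eq_vStar_of_mem_GammaFwd hx₀⟩,
        forall_mem_image.2 fun x _ => S.vStar_le_Fv hp x⟩
    exact hleast.csInf_eq.symm
  · obtain ⟨hd, hs⟩ := hopt x hx
    exact ⟨S.mem_GammaFwd_of_Fv_eq_vStar hd hs, S.Fv_eq_vStar_of_mem_GammaFwd⟩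

/-- If `Γ*` is nonempty then `v* = inf_{cl Ω} F_v`, the infimum being attained at
every point of `Γ*`; and if optimal trajectories exist from every starting point (for both the
forward and the reverse problems), then `F_v(x) = v*` iff `x ∈ Γ*`, for `x ∈ cl Ω`. -/
theorem vStar_eq_inf_Fv {d : ℕ} (S : Setting d)
    (hvd : ContinuousOn S.vd (closure S.Ω)) (hvs : ContinuousOn S.vs (closure S.Ω))
    (hne : S.GammaFwd.Nonempty) :
    S.vStar = sInf (S.Fv '' closure S.Ω) ∧
    (∀ x ∈ S.GammaFwd, S.Fv x = S.vStar) ∧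
    ((∀ x ∈ closure S.Ω,
        (∃ τ y, IsTraj (closure S.Ω) S.f 1 x τ y ∧ y τ ∈ S.Kdst ∧
          ENNReal.ofReal τ = S.Td x) ∧
        (∃ τ y, IsTraj (closure S.Ω) S.f (-1) x τ y ∧ y τ ∈ S.Ksrc ∧
          ENNReal.ofReal τ = S.Ts x)) →
      ∀ x ∈ closure S.Ω, (S.Fv x = S.vStar ↔ x ∈ S.GammaFwd)) :=
  vStar_eq_inf_Fv_general S hne
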